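/- arXiv:1204.5488 — 4 statements merged into one kernel-verified Lean document; each statement's English description precedes it below -/
import Mathlib

section
/- α₀ = α if and only if σ_s ≤ σ_b. -/
open Filter Topology

/-- A cumulative distribution function: non-decreasing, right-continuous,
tending to 0 at -∞ and to 1 at +∞. -/
def IsCDF (G : ℝ → ℝ) : Prop :=
  Monotone G ∧ (∀ x : ℝ, ContinuousWithinAt G (Set.Ici x) x) ∧
    Tendsto G atBot (𝓝 0) ∧ Tendsto G atTop (𝓝 1)

/-- The identifiable mixing proportion α₀. -/
noncomputable def alpha0 (F Fb : ℝ → ℝ) : ℝ :=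
  sInf {γ : ℝ | γ ∈ Set.Ioc (0 : ℝ) 1 ∧
    IsCDF (fun x => (F x - (1 - γ) * Fb x) / γ)}

open MeasureTheory ProbabilityTheory

/-!
When `Fs` and `Fb` have continuous densities `fs` and `fb`, the candidate
`(F - (1 - γ) Fb) / γ` has the continuous density `(α fs - (α - γ) fb) / γ`, and it is a CDF
exactly when this density is nonnegative (a monotone function has nonnegative derivative).
Hence `α₀ < α` iff `c fb ≤ fs` for some `c > 0`. For Gaussians `log (fs / fb)` is a polynomial
of degree at most two with leading coefficient `1 / (2σb²) - 1 / (2σs²)`, and it is bounded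
below iff that coefficient is positive or the polynomial is constant, i.e. iff `σb < σs` or
the two Gaussians coincide.
-/

open Set Real
open scoped NNReal

section Density

variable {g : ℝ → ℝ}

theorem hasDerivAt_integral_Iic (hc : Continuous g) (hi : Integrable g) (x : ℝ) :
    HasDerivAt (fun y => ∫ t in Iic y, g t) (g x) x := by
  have hsplit :
      (fun y => ∫ t in Iic y, g t) = fun y => (∫ t in Iic 0, g t) + ∫ t in 0..y, g t := by
    funext y
    rw [← intervalIntegral.integral_Iic_sub_Iic hi.integrableOn hi.integrableOn, add_sub_cancel]
  rw [hsplit]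
  exact ((hc.integral_hasStrictDerivAt 0 x).hasDerivAt).const_add _

theorem isCDF_integral_Iic_iff (hc : Continuous g) (hi : Integrable g) (h1 : ∫ t, g t = 1) :
    IsCDF (fun x => ∫ t in Iic x, g t) ↔ ∀ x, 0 ≤ g x := by
  refine ⟨fun hG x => (hasDerivAt_integral_Iic hc hi x).deriv ▸ hG.1.deriv_nonneg, fun hg => ?_⟩
  refine ⟨fun x y hxy => setIntegral_mono_set hi.integrableOn (ae_of_all _ hg)
      (Iic_subset_Iic.mpr hxy).eventuallyLE,
    fun x => (hasDerivAt_integral_Iic hc hi x).continuousAt.continuousWithinAt,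
    tendsto_integral_Iic_zero tendsto_id, ?_⟩
  have hcompl : ∀ x, ∫ t in Iic x, g t = 1 - ∫ t in Ioi x, g t := fun x => by
    rw [← compl_Iic, setIntegral_compl measurableSet_Iic hi, h1, sub_sub_cancel]
  simp_rw [hcompl]
  simpa using (tendsto_integral_Ioi_zero (f := g) (μ := volume) tendsto_id).const_sub 1

end Density

section Mixture

variable {fs fb : ℝ → ℝ} {α γ : ℝ}

theorem isCDF_mixture_sub_iff (hcs : Continuous fs) (his : Integrable fs) (h1s : ∫ t, fs t = 1)
    (hcb : Continuous fb) (hib : Integrable fb) (h1b : ∫ t, fb t = 1) (hγ : 0 < γ) :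
    IsCDF (fun x => (α * (∫ t in Iic x, fs t) + (1 - α) * (∫ t in Iic x, fb t)
      - (1 - γ) * ∫ t in Iic x, fb t) / γ) ↔ ∀ x, (α - γ) * fb x ≤ α * fs x := by
  set g : ℝ → ℝ := fun t => (α * fs t + (γ - α) * fb t) / γ
  have hig : Integrable g := ((his.const_mul α).add (hib.const_mul (γ - α))).div_const γ
  have hG : (fun x => (α * (∫ t in Iic x, fs t) + (1 - α) * (∫ t in Iic x, fb t)
      - (1 - γ) * ∫ t in Iic x, fb t) / γ) = fun x => ∫ t in Iic x, g t := by
    funext x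
    rw [integral_div, integral_add (his.const_mul α).integrableOn (hib.const_mul _).integrableOn,
      integral_const_mul, integral_const_mul]
    ring
  have h1g : ∫ t, g t = 1 := by
    rw [integral_div, integral_add (his.const_mul α) (hib.const_mul _), integral_const_mul,
      integral_const_mul, h1s, h1b]
    field_simp
    ring
  rw [hG, isCDF_integral_Iic_iff (by fun_prop) hig h1g]
  refine forall_congr' fun x => ?_
  rw [le_div_iff₀ hγ, zero_mul]
  constructor <;> intro <;> linarith

theorem alpha0_mixture_eq_iff (hcs : Continuous fs) (his : Integrable fs) (h0s : ∀ x, 0 ≤ fs x)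
    (h1s : ∫ t, fs t = 1) (hcb : Continuous fb) (hib : Integrable fb) (h0b : ∀ x, 0 ≤ fb x)
    (h1b : ∫ t, fb t = 1) (hα : α ∈ Ioc 0 1) :
    alpha0 (fun x => α * (∫ t in Iic x, fs t) + (1 - α) * ∫ t in Iic x, fb t)
      (fun x => ∫ t in Iic x, fb t) = α ↔ ¬∃ c > 0, ∀ x, c * fb x ≤ fs x := by
  set S := {γ : ℝ | γ ∈ Ioc (0 : ℝ) 1 ∧ IsCDF (fun x => (α * (∫ t in Iic x, fs t)
    + (1 - α) * (∫ t in Iic x, fb t) - (1 - γ) * ∫ t in Iic x, fb t) / γ)}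
  have hmem : ∀ γ ∈ Ioc (0 : ℝ) 1, γ ∈ S ↔ ∀ x, (α - γ) * fb x ≤ α * fs x := fun γ hγ =>
    (and_iff_right hγ).trans (isCDF_mixture_sub_iff hcs his h1s hcb hib h1b hγ.1)
  have hαS : α ∈ S := (hmem α hα).2 fun x => by simpa using mul_nonneg hα.1.le (h0s x)
  change sInf S = α ↔ _
  obtain ⟨hα0, hα1⟩ := hα
  constructor
  · rintro hinf ⟨c, hc, hcle⟩
    obtain ⟨d, hd0, hd1, hdc⟩ : ∃ d, 0 < d ∧ d < 1 ∧ d ≤ c :=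
      ⟨min c (1 / 2), by positivity, by linarith [min_le_right c (1 / 2)], min_le_left _ _⟩
    have hγS : α * (1 - d) ∈ S := by
      refine (hmem _ ⟨by nlinarith, by nlinarith⟩).2 fun x => ?_
      have := mul_le_mul_of_nonneg_right hdc (h0b x)
      nlinarith [hcle x]
    have := csInf_le ⟨0, fun γ hγ => hγ.1.1.le⟩ hγS
    nlinarith
  · intro hno
    refine IsLeast.csInf_eq ⟨hαS, fun γ hγS => not_lt.1 fun hγα => hno ?_⟩
    refine ⟨(α - γ) / α, div_pos (by linarith) hα0, fun x => ?_⟩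
    rw [div_mul_eq_mul_div, div_le_iff₀ hα0, mul_comm (fs x)]
    exact (hmem γ hγS.1).1 hγS x

end Mixture

theorem bddBelow_range_quadratic_iff (a b c : ℝ) :
    BddBelow (range fun x => a * x ^ 2 + b * x + c) ↔ 0 < a ∨ a = 0 ∧ b = 0 := by
  constructor
  · rintro ⟨m, hm⟩
    simp only [mem_lowerBounds, forall_mem_range] at hm
    by_contra! h
    rcases h.1.lt_or_eq with ha | rfl
    · set y := √((|c - m| + 1) / -a)
      have hy : a * y ^ 2 = -(|c - m| + 1) := by
        rw [sq_sqrt (div_nonneg (by positivity) (by linarith))]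
        field_simp [ha.ne]
      nlinarith [hm y, hm (-y), le_abs_self (c - m)]
    · have := hm ((m - c - 1) / b)
      rw [zero_mul, zero_add, mul_div_cancel₀ _ (h.2 rfl)] at this
      linarith
  · rintro (ha | ⟨rfl, rfl⟩)
    · refine ⟨c - b ^ 2 / (4 * a), forall_mem_range.2 fun x => ?_⟩
      have : b ^ 2 / (4 * a) * (4 * a) = b ^ 2 := div_mul_cancel₀ _ (by positivity)
      nlinarith [sq_nonneg (2 * a * x + b)]
    · exact ⟨c, forall_mem_range.2 fun x => by simp⟩

theorem exists_pos_mul_le_mul_exp_iff {A B : ℝ} (hA : 0 < A) (hB : 0 < B) (u w : ℝ → ℝ) :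
    (∃ c > 0, ∀ x, c * (A * exp (u x)) ≤ B * exp (w x)) ↔
      BddBelow (range fun x => w x - u x) := by
  have key : ∀ c > 0, ∀ x, c * (A * exp (u x)) ≤ B * exp (w x) ↔ log (c * A / B) ≤ w x - u x :=
    fun c hc x => by
      rw [iff_comm, le_sub_iff_add_le, ← exp_le_exp, exp_add, exp_log (by positivity),
        div_mul_eq_mul_div, div_le_iff₀ hB]
      ring_nf
  constructor
  · rintro ⟨c, hc, h⟩
    exact ⟨log (c * A / B), forall_mem_range.2 fun x => (key c hc x).1 (h x)⟩
  · rintro ⟨m, hm⟩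
    refine ⟨exp m * B / A, by positivity, fun x => (key _ (by positivity) x).2 ?_⟩
    rw [div_mul_cancel₀ _ hA.ne', mul_div_cancel_right₀ _ hB.ne', log_exp]
    exact hm (mem_range_self x)

theorem continuous_gaussianPDFReal (m : ℝ) (v : ℝ≥0) : Continuous (gaussianPDFReal m v) := by
  unfold gaussianPDFReal
  fun_prop

theorem gaussianReal_Iic_toReal (m : ℝ) {v : ℝ≥0} (hv : v ≠ 0) (x : ℝ) :
    (gaussianReal m v (Iic x)).toReal = ∫ t in Iic x, gaussianPDFReal m v t := by
  rw [gaussianReal_apply_eq_integral m hv, ENNReal.toReal_ofReal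
    (setIntegral_nonneg measurableSet_Iic fun t _ => gaussianPDFReal_nonneg m v t)]

theorem exists_pos_mul_gaussianPDFReal_le_iff (ms mb : ℝ) {vs vb : ℝ≥0} (hvs : vs ≠ 0)
    (hvb : vb ≠ 0) :
    (∃ c > 0, ∀ x, c * gaussianPDFReal mb vb x ≤ gaussianPDFReal ms vs x) ↔
      vb < vs ∨ vb = vs ∧ mb = ms := by
  have hvs' : (0 : ℝ) < vs := by positivity
  have hvb' : (0 : ℝ) < vb := by positivity
  have hquad : (fun x => -(x - ms) ^ 2 / (2 * vs) - -(x - mb) ^ 2 / (2 * vb)) =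
      fun x : ℝ => (1 / (2 * vb) - 1 / (2 * vs)) * x ^ 2 + (ms / vs - mb / vb) * x
        + (mb ^ 2 / (2 * vb) - ms ^ 2 / (2 * vs)) := by
    funext x
    field_simp
    ring
  simp only [gaussianPDFReal]
  rw [exists_pos_mul_le_mul_exp_iff (by positivity) (by positivity), hquad,
    bddBelow_range_quadratic_iff, sub_pos, sub_eq_zero, sub_eq_zero,
    one_div_lt_one_div (by positivity) (by positivity), mul_lt_mul_iff_right₀ two_pos,
    one_div, one_div, inv_inj, mul_right_inj' two_ne_zero, NNReal.coe_lt_coe, NNReal.coe_inj]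
  refine or_congr_right (and_congr_right fun h => ?_)
  rw [h, div_left_inj' hvs'.ne', eq_comm]

/-- For a two-component Gaussian mixture with F_s the CDF of N(μ_s, σ_s²) and
F_b the CDF of N(μ_b, σ_b²): α₀ = α if and only if σ_s ≤ σ_b. -/
theorem alpha0_gaussian
    (mus mub sigmas sigmab : ℝ) (hsigmas : 0 < sigmas) (hsigmab : 0 < sigmab)
    (hne : (mus, sigmas) ≠ (mub, sigmab))
    (Fs Fb : ℝ → ℝ)
    (hFs : Fs = fun x => (gaussianReal mus (Real.toNNReal (sigmas ^ 2)) (Set.Iic x)).toReal)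
    (hFb : Fb = fun x => (gaussianReal mub (Real.toNNReal (sigmab ^ 2)) (Set.Iic x)).toReal)
    (α : ℝ) (hα : α ∈ Set.Ioc (0 : ℝ) 1)
    (F : ℝ → ℝ) (hF : F = fun x => α * Fs x + (1 - α) * Fb x) :
    alpha0 F Fb = α ↔ sigmas ≤ sigmab := by
  have hvs : (sigmas ^ 2).toNNReal ≠ 0 := by simpa using hsigmas.ne'
  have hvb : (sigmab ^ 2).toNNReal ≠ 0 := by simpa using hsigmab.ne'
  have hvlt : (sigmab ^ 2).toNNReal < (sigmas ^ 2).toNNReal ↔ sigmab < sigmas := by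
    rw [Real.toNNReal_lt_toNNReal_iff (by positivity),
      pow_lt_pow_iff_left₀ hsigmab.le hsigmas.le two_ne_zero]
  have hveq : (sigmab ^ 2).toNNReal = (sigmas ^ 2).toNNReal ↔ sigmab = sigmas := by
    rw [Real.toNNReal_eq_toNNReal_iff (by positivity) (by positivity),
      pow_left_inj₀ hsigmab.le hsigmas.le two_ne_zero]
  subst hF hFs hFb
  simp only [gaussianReal_Iic_toReal _ hvs, gaussianReal_Iic_toReal _ hvb]
  rw [alpha0_mixture_eq_iff (continuous_gaussianPDFReal _ _) (integrable_gaussianPDFReal _ _)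
      (gaussianPDFReal_nonneg _ _) (integral_gaussianPDFReal_eq_one _ hvs)
      (continuous_gaussianPDFReal _ _) (integrable_gaussianPDFReal _ _)
      (gaussianPDFReal_nonneg _ _) (integral_gaussianPDFReal_eq_one _ hvb) hα,
    exists_pos_mul_gaussianPDFReal_le_iff _ _ hvs hvb, hvlt, hveq]
  refine ⟨fun h => not_lt.1 fun hlt => h (Or.inl hlt), fun hle => ?_⟩
  rintro (hlt | ⟨rfl, rfl⟩)
  exacts [hle.not_gt hlt, hne rfl]
end

section
/- It holds that α₀ = α − min{ (ακ_s − α₀^{(a)}κ)/κ_b , (α(1−κ_s) − α₀^{(d)}(1−κ))/(1−κ_b) }. -/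
open Filter Topology

open MeasureTheory

/-- An absolutely continuous CDF: a CDF with a density w.r.t. Lebesgue measure. -/
def IsACCDF (G : ℝ → ℝ) : Prop :=
  IsCDF G ∧ ∃ g : ℝ → ℝ, Integrable g volume ∧ (∀ᵐ x ∂volume, 0 ≤ g x) ∧
    ∀ x : ℝ, G x = ∫ t in Set.Iic x, g t

/-- A piecewise-constant (purely discrete) CDF: all its mass is carried by
countably many atoms. -/
def IsDiscreteCDF (G : ℝ → ℝ) : Prop :=
  IsCDF G ∧ ∃ (a : ℕ → ℝ) (w : ℕ → ℝ), (∀ n : ℕ, 0 ≤ w n) ∧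
    ∀ x : ℝ, G x = ∑' n : ℕ, if a n ≤ x then w n else 0

/-! Write `maxMonoCoeff G H` for the largest `β` such that `G - β H` is non-decreasing; then
`α₀ = 1 - maxMonoCoeff F F_b`, and this threshold is affine under mixing `G` with `H`.
`F_s - β F_b` splits into a continuous part (from the absolutely continuous components) and a
pure jump part (from the discrete ones). If their sum is monotone, both are: its jumps are those of
the jump part, hence nonnegative, and the jumps of a monotone right-continuous function in
`(x, y]` add up to at most its increment (its Stieltjes measure dominates its atoms). So the
threshold of `F_s, F_b` is the minimum of the rescaled thresholds of the two parts. -/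

open Set

namespace IsCDF

variable {G H : ℝ → ℝ}

lemma nonneg (hG : IsCDF G) (x : ℝ) : 0 ≤ G x :=
  hG.1.le_of_tendsto hG.2.2.1 x

lemma le_one (hG : IsCDF G) (x : ℝ) : G x ≤ 1 :=
  hG.1.ge_of_tendsto hG.2.2.2 x

lemma exists_lt (hG : IsCDF G) : ∃ x y, G x < G y := by
  obtain ⟨y, hy⟩ := (hG.2.2.2.eventually (eventually_gt_nhds one_half_lt_one)).exists
  obtain ⟨x, hx⟩ := (hG.2.2.1.eventually (eventually_lt_nhds one_half_pos)).exists
  exact ⟨x, y, hx.trans hy⟩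

lemma mix (hG : IsCDF G) (hH : IsCDF H) {c : ℝ} (hc₀ : 0 ≤ c) (hc₁ : c ≤ 1) :
    IsCDF (fun x => c * G x + (1 - c) * H x) := by
  refine ⟨fun x y hxy => ?_, fun x => ?_, ?_, ?_⟩
  · exact add_le_add (mul_le_mul_of_nonneg_left (hG.1 hxy) hc₀)
      (mul_le_mul_of_nonneg_left (hH.1 hxy) (sub_nonneg.2 hc₁))
  · exact (continuousWithinAt_const.mul (hG.2.1 x)).add
      (continuousWithinAt_const.mul (hH.2.1 x))
  · simpa using (hG.2.2.1.const_mul c).add (hH.2.2.1.const_mul (1 - c))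
  · simpa using (hG.2.2.2.const_mul c).add (hH.2.2.2.const_mul (1 - c))

lemma rightContinuous_mul_sub_mul (hG : IsCDF G) (hH : IsCDF H) (a b x : ℝ) :
    ContinuousWithinAt (fun x => a * G x - b * H x) (Ici x) x :=
  (continuousWithinAt_const.mul (hG.2.1 x)).sub (continuousWithinAt_const.mul (hH.2.1 x))

lemma isCDF_div_iff_monotone (hG : IsCDF G) (hH : IsCDF H) {γ : ℝ} (hγ : 0 < γ) :
    IsCDF (fun x => (G x - (1 - γ) * H x) / γ) ↔ Monotone (fun x => G x - (1 - γ) * H x) := by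
  refine ⟨fun h x y hxy => ?_, fun h => ⟨h.div_const hγ.le, fun x => ?_, ?_, ?_⟩⟩
  · simpa [div_le_div_iff_of_pos_right hγ] using h.1 hxy
  · exact ((hG.2.1 x).sub (continuousWithinAt_const.mul (hH.2.1 x))).div_const γ
  · simpa using (hG.2.2.1.sub (hH.2.2.1.const_mul (1 - γ))).div_const γ
  · simpa [hγ.ne'] using (hG.2.2.2.sub (hH.2.2.2.const_mul (1 - γ))).div_const γ

end IsCDF

noncomputable def maxMonoCoeff (ψ φ : ℝ → ℝ) : ℝ :=
  sSup {β : ℝ | Monotone fun x => ψ x - β * φ x}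

section maxMonoCoeff

variable {ψ φ : ℝ → ℝ}

lemma isClosed_setOf_monotone_sub_mul :
    IsClosed {β : ℝ | Monotone fun x => ψ x - β * φ x} := by
  have : {β : ℝ | Monotone fun x => ψ x - β * φ x} =
      ⋂ x, ⋂ y, ⋂ (_ : x ≤ y), {β | ψ x - β * φ x ≤ ψ y - β * φ y} := by
    ext; simp [Monotone]
  rw [this]
  exact isClosed_iInter fun x => isClosed_iInter fun y => isClosed_iInter fun _ =>
    isClosed_le (by fun_prop) (by fun_prop)

variable (hψ : IsCDF ψ) (hφ : IsCDF φ)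
include hψ hφ

lemma bddAbove_setOf_monotone_sub_mul :
    BddAbove {β : ℝ | Monotone fun x => ψ x - β * φ x} := by
  obtain ⟨x, y, hxy⟩ := hφ.exists_lt
  have hle : x ≤ y := (hφ.1.reflect_lt hxy).le
  refine ⟨1 / (φ y - φ x), fun β hβ => (le_div_iff₀ (sub_pos.2 hxy)).2 ?_⟩
  have := hβ hle
  nlinarith [hψ.nonneg x, hψ.le_one y]

lemma monotone_sub_mul_iff_le (β : ℝ) :
    Monotone (fun x => ψ x - β * φ x) ↔ β ≤ maxMonoCoeff ψ φ := by
  have hne : {β : ℝ | Monotone fun x => ψ x - β * φ x}.Nonempty := ⟨0, by simpa using hψ.1⟩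
  have hbdd := bddAbove_setOf_monotone_sub_mul hψ hφ
  refine ⟨fun hβ => le_csSup hbdd hβ, fun hβ x y hxy => ?_⟩
  have hmax : Monotone fun x => ψ x - maxMonoCoeff ψ φ * φ x :=
    isClosed_setOf_monotone_sub_mul.csSup_mem hne hbdd
  have := mul_le_mul_of_nonneg_right hβ (sub_nonneg.2 (hφ.1 hxy))
  nlinarith [hmax hxy]

lemma maxMonoCoeff_nonneg : 0 ≤ maxMonoCoeff ψ φ :=
  (monotone_sub_mul_iff_le hψ hφ 0).1 (by simpa using hψ.1)

lemma maxMonoCoeff_le_one : maxMonoCoeff ψ φ ≤ 1 := by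
  have hmono := (monotone_sub_mul_iff_le hψ hφ _).2 le_rfl
  have hbot : Tendsto (fun x => ψ x - maxMonoCoeff ψ φ * φ x) atBot (𝓝 0) := by
    simpa using hψ.2.2.1.sub (hφ.2.2.1.const_mul (maxMonoCoeff ψ φ))
  have htop : Tendsto (fun x => ψ x - maxMonoCoeff ψ φ * φ x) atTop
      (𝓝 (1 - maxMonoCoeff ψ φ)) := by
    simpa using hψ.2.2.2.sub (hφ.2.2.2.const_mul (maxMonoCoeff ψ φ))
  linarith [hmono.le_of_tendsto hbot 0, hmono.ge_of_tendsto htop 0]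

lemma monotone_mul_sub_mul_iff {c : ℝ} (hc : 0 < c) (b : ℝ) :
    Monotone (fun x => c * ψ x - b * φ x) ↔ b ≤ c * maxMonoCoeff ψ φ := by
  have hscale : (fun x => c * ψ x - b * φ x) = fun x => c * (ψ x - b / c * φ x) := by
    funext x; field_simp
  rw [hscale, ← div_le_iff₀' hc, ← monotone_sub_mul_iff_le hψ hφ]
  exact ⟨fun h x y hxy => le_of_mul_le_mul_left (h hxy) hc,
    fun h x y hxy => mul_le_mul_of_nonneg_left (h hxy) hc.le⟩

lemma maxMonoCoeff_mix {c : ℝ} (hc₀ : 0 < c) (hc₁ : c ≤ 1) :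
    maxMonoCoeff (fun x => c * ψ x + (1 - c) * φ x) φ = c * maxMonoCoeff ψ φ + (1 - c) := by
  refine eq_of_forall_le_iff fun β => ?_
  rw [← monotone_sub_mul_iff_le (hψ.mix hφ hc₀.le hc₁) hφ, ← sub_le_iff_le_add,
    ← monotone_mul_sub_mul_iff hψ hφ hc₀]
  exact iff_of_eq (congrArg Monotone (funext fun x => by ring))

end maxMonoCoeff

lemma sInf_setOf_mem_Ioc_and_le {c : ℝ} (hc₀ : 0 ≤ c) (hc₁ : c ≤ 1) :
    sInf {γ : ℝ | γ ∈ Ioc (0 : ℝ) 1 ∧ c ≤ γ} = c := by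
  rcases hc₀.eq_or_lt with rfl | hc
  · have : {γ : ℝ | γ ∈ Ioc (0 : ℝ) 1 ∧ 0 ≤ γ} = Ioc 0 1 :=
      ext fun γ => ⟨fun h => h.1, fun h => ⟨h, h.1.le⟩⟩
    rw [this, csInf_Ioc zero_lt_one]
  · have : {γ : ℝ | γ ∈ Ioc (0 : ℝ) 1 ∧ c ≤ γ} = Icc c 1 := by
      ext γ; simp only [mem_ofPred_eq, mem_Ioc, mem_Icc]
      exact ⟨fun h => ⟨h.2, h.1.2⟩, fun h => ⟨⟨hc.trans_le h.1, h.2⟩, h.1⟩⟩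
    rw [this, csInf_Icc hc₁]

lemma alpha0_eq_one_sub_maxMonoCoeff {F Fb : ℝ → ℝ} (hF : IsCDF F) (hFb : IsCDF Fb) :
    alpha0 F Fb = 1 - maxMonoCoeff F Fb := by
  have hset : {γ : ℝ | γ ∈ Ioc (0 : ℝ) 1 ∧ IsCDF (fun x => (F x - (1 - γ) * Fb x) / γ)} =
      {γ : ℝ | γ ∈ Ioc (0 : ℝ) 1 ∧ 1 - maxMonoCoeff F Fb ≤ γ} := by
    ext γ
    simp only [mem_ofPred_eq, and_congr_right_iff]
    intro hγ
    rw [hF.isCDF_div_iff_monotone hFb hγ.1, monotone_sub_mul_iff_le hF hFb, sub_le_comm]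
  rw [alpha0, hset, sInf_setOf_mem_Ioc_and_le (by linarith [maxMonoCoeff_le_one hF hFb])
    (by linarith [maxMonoCoeff_nonneg hF hFb])]

lemma alpha0_mix {G H : ℝ → ℝ} (hG : IsCDF G) (hH : IsCDF H) {c : ℝ} (hc₀ : 0 < c)
    (hc₁ : c ≤ 1) :
    alpha0 (fun x => c * G x + (1 - c) * H x) H = c * (1 - maxMonoCoeff G H) := by
  rw [alpha0_eq_one_sub_maxMonoCoeff (hG.mix hH hc₀.le hc₁) hH, maxMonoCoeff_mix hG hH hc₀ hc₁]
  ring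

-- The properties of `fun x => ∑' i, if p i ≤ x then w i else 0` that survive linear combinations.
def IsJumpFunction (D J : ℝ → ℝ) : Prop :=
  (∀ t, Tendsto D (𝓝[<] t) (𝓝 (D t - J t))) ∧
    ∀ x y, x ≤ y → HasSum ((Ioc x y).indicator J) (D y - D x)

lemma IsJumpFunction.mul_sub_mul {D E J K : ℝ → ℝ} (hD : IsJumpFunction D J)
    (hE : IsJumpFunction E K) (a b : ℝ) :
    IsJumpFunction (fun x => a * D x - b * E x) (fun t => a * J t - b * K t) := by
  refine ⟨fun t => ?_, fun x y hxy => ?_⟩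
  · convert ((hD.1 t).const_mul a).sub ((hE.1 t).const_mul b) using 2
    ring
  · have hind : (Ioc x y).indicator (fun t => a * J t - b * K t) =
        fun t => a * (Ioc x y).indicator J t - b * (Ioc x y).indicator K t := by
      ext t
      by_cases ht : t ∈ Ioc x y <;> simp [ht]
    have := ((hD.2 x y hxy).mul_left a).sub ((hE.2 x y hxy).mul_left b)
    rw [hind]
    rwa [show a * (D y - D x) - b * (E y - E x) = (a * D y - b * E y) - (a * D x - b * E x)
      by ring] at this

section tsum

variable {ι : Type*} {p w : ι → ℝ}

lemma tsum_ite_le_sub_tsum_ite_le (hw : Summable w) {x y : ℝ} (hxy : x ≤ y) :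
    (∑' i, if p i ≤ y then w i else 0) - ∑' i, (if p i ≤ x then w i else 0) =
      ∑' i, (p ⁻¹' Ioc x y).indicator w i := by
  have hs (z : ℝ) : Summable fun i => if p i ≤ z then w i else 0 :=
    (hw.indicator (p ⁻¹' Iic z)).congr fun i => by by_cases h : p i ≤ z <;> simp [h]
  rw [← (hs y).tsum_sub (hs x)]
  congr 1
  ext i
  by_cases hx : p i ≤ x <;> by_cases hy : p i ≤ y <;> simp [Set.indicator, hx, hy]
  linarith

lemma isJumpFunction_tsum_ite (hw : Summable w) :
    IsJumpFunction (fun x => ∑' i, if p i ≤ x then w i else 0)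
      (fun t => ∑' i : p ⁻¹' {t}, w i) := by
  refine ⟨fun t => ?_, fun x y hxy => ?_⟩
  · have hpoint : ∀ i, ∀ᶠ s in 𝓝[<] t,
        (p ⁻¹' Ioc s t).indicator w i = (p ⁻¹' {t}).indicator w i := by
      intro i
      by_cases hi : p i < t
      · filter_upwards [Ioo_mem_nhdsLT hi] with s hs
        rw [indicator_of_notMem (by grind), indicator_of_notMem (by grind)]
      · filter_upwards [self_mem_nhdsWithin] with s (hs : s < t)
        by_cases hit : p i = t
        · rw [indicator_of_mem (by grind), indicator_of_mem (by grind)]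
        · rw [indicator_of_notMem (by grind), indicator_of_notMem (by grind)]
    have hjump : Tendsto (fun s => ∑' i, (p ⁻¹' Ioc s t).indicator w i) (𝓝[<] t)
        (𝓝 (∑' i : p ⁻¹' {t}, w i)) := by
      rw [tsum_subtype]
      refine tendsto_tsum_of_dominated_convergence hw.norm
        (fun i => tendsto_const_nhds.congr' (EventuallyEq.symm (hpoint i))) ?_
      exact Eventually.of_forall fun s i => norm_indicator_le_norm_self w i
    have hsub : ∀ᶠ s in 𝓝[<] t, ∑' i, (p ⁻¹' Ioc s t).indicator w i =
        (∑' i, if p i ≤ t then w i else 0) - ∑' i, if p i ≤ s then w i else 0 := by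
      filter_upwards [self_mem_nhdsWithin] with s (hs : s < t)
      exact (tsum_ite_le_sub_tsum_ite_le hw hs.le).symm
    exact (tendsto_const_nhds.sub (hjump.congr' hsub)).congr fun s => sub_sub_cancel _ _
  · have hfib : (Ioc x y).indicator (fun t => ∑' i : p ⁻¹' {t}, w i) =
        fun t => ∑' i : p ⁻¹' {t}, (p ⁻¹' Ioc x y).indicator w i := by
      ext t
      have hmem (i : p ⁻¹' {t}) : (i : ι) ∈ p ⁻¹' Ioc x y ↔ t ∈ Ioc x y := by
        rw [mem_preimage, show p i = t from i.2]
      by_cases ht : t ∈ Ioc x y <;> simp [ht, hmem]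
    rw [hfib, tsum_ite_le_sub_tsum_ite_le hw hxy]
    exact (hw.indicator _).hasSum.tsum_fiberwise p

lemma summable_of_isCDF_eq_tsum_ite {G : ℝ → ℝ} (hG : IsCDF G) (hw : ∀ i, 0 ≤ w i)
    (hrep : ∀ x, G x = ∑' i, if p i ≤ x then w i else 0) : Summable w := by
  obtain ⟨x₀, hx₀⟩ := eventually_atTop.1
    (hG.2.2.2.eventually (eventually_gt_nhds (by norm_num : (0 : ℝ) < 1)))
  refine summable_of_sum_le hw (c := 1) fun u => ?_
  obtain ⟨M, hM⟩ := (u.image p).bddAbove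
  set y := max x₀ M
  have hsy : Summable fun i => if p i ≤ y then w i else 0 := by
    by_contra hns
    have := hx₀ y (le_max_left _ _)
    rw [hrep, tsum_eq_zero_of_not_summable hns] at this
    exact lt_irrefl _ this
  calc ∑ i ∈ u, w i = ∑ i ∈ u, (if p i ≤ y then w i else 0) :=
        Finset.sum_congr rfl fun i hi =>
          (if_pos ((hM (Finset.mem_image_of_mem p hi)).trans (le_max_right _ _))).symm
    _ ≤ ∑' i, (if p i ≤ y then w i else 0) :=
        hsy.sum_le_tsum u fun i _ => by split_ifs <;> simp [hw i]
    _ = G y := (hrep y).symm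
    _ ≤ 1 := hG.le_one y

end tsum

lemma IsDiscreteCDF.exists_isJumpFunction {G : ℝ → ℝ} (hG : IsDiscreteCDF G) :
    ∃ J, IsJumpFunction G J := by
  obtain ⟨hcdf, p, w, hw, hrep⟩ := hG
  rw [show G = _ from funext hrep]
  exact ⟨_, isJumpFunction_tsum_ite (summable_of_isCDF_eq_tsum_ite hcdf hw hrep)⟩

lemma IsACCDF.continuous {G : ℝ → ℝ} (hG : IsACCDF G) : Continuous G := by
  obtain ⟨-, g, hg, -, hrep⟩ := hG
  have : G = fun x => (∫ t in (0 : ℝ)..x, g t) + ∫ t in Iic 0, g t := by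
    funext x
    rw [hrep, ← intervalIntegral.integral_Iic_sub_Iic hg.integrableOn hg.integrableOn]
    ring
  rw [this]
  exact (hg.continuous_primitive 0).add continuous_const

lemma StieltjesFunction.sum_indicator_jump_le (f : StieltjesFunction ℝ) {x y : ℝ} (hxy : x ≤ y)
    (s : Finset ℝ) :
    ∑ t ∈ s, (Ioc x y).indicator (fun t => f t - Function.leftLim f t) t ≤ f y - f x := by
  rw [Finset.sum_indicator_eq_sum_filter]
  have hmeas : ∑ t ∈ s with t ∈ Ioc x y, ENNReal.ofReal (f t - Function.leftLim f t) ≤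
      ENNReal.ofReal (f y - f x) := by
    simp_rw [← f.measure_singleton, ← f.measure_Ioc, sum_measure_singleton]
    exact measure_mono fun t ht => (Finset.mem_filter.1 ht).2
  rwa [← ENNReal.ofReal_sum_of_nonneg fun t _ => sub_nonneg.2 (f.mono.leftLim_le le_rfl),
    ENNReal.ofReal_le_ofReal_iff (sub_nonneg.2 (f.mono hxy))] at hmeas

lemma IsJumpFunction.monotone_of_monotone_add {A D J : ℝ → ℝ} (hD : IsJumpFunction D J)
    (hA : Continuous A) (hrc : ∀ x, ContinuousWithinAt D (Ici x) x)
    (hmono : Monotone fun x => A x + D x) :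
    Monotone A ∧ Monotone D := by
  let h : StieltjesFunction ℝ :=
    ⟨fun x => A x + D x, hmono, fun x => hA.continuousWithinAt.add (hrc x)⟩
  have hJ : J = fun t => h t - Function.leftLim h t := by
    funext t
    have hlim : Tendsto h (𝓝[<] t) (𝓝 (h t - J t)) := by
      convert (hA.continuousAt.mono_left nhdsWithin_le_nhds).add (hD.1 t) using 2
      simp only [h]; ring
    linarith [tendsto_nhds_unique hlim (h.mono.tendsto_leftLim t)]
  rw [hJ] at hD
  have hDmono : Monotone D := fun x y hxy => sub_nonneg.1 <| (hD.2 x y hxy).nonneg fun t =>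
    indicator_nonneg (fun t _ => sub_nonneg.2 (h.mono.leftLim_le le_rfl)) t
  refine ⟨fun x y hxy => ?_, hDmono⟩
  have : D y - D x ≤ h y - h x := hasSum_le_of_sum_le (hD.2 x y hxy) (h.sum_indicator_jump_le hxy)
  simp only [h] at this
  linarith

section acDiscrete

variable {Ga Ha Gd Hd : ℝ → ℝ} (hGa : IsACCDF Ga) (hHa : IsACCDF Ha)
  (hGd : IsDiscreteCDF Gd) (hHd : IsDiscreteCDF Hd)
include hGa hHa hGd hHd

lemma monotone_mix_sub_mul_mix_iff (p q β : ℝ) :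
    Monotone (fun x => (p * Ga x + (1 - p) * Gd x) - β * (q * Ha x + (1 - q) * Hd x)) ↔
      Monotone (fun x => p * Ga x - β * q * Ha x) ∧
        Monotone (fun x => (1 - p) * Gd x - β * (1 - q) * Hd x) := by
  obtain ⟨J, hJ⟩ := hGd.exists_isJumpFunction
  obtain ⟨K, hK⟩ := hHd.exists_isJumpFunction
  have hsplit : (fun x => (p * Ga x + (1 - p) * Gd x) - β * (q * Ha x + (1 - q) * Hd x)) =
      fun x => (p * Ga x - β * q * Ha x) + ((1 - p) * Gd x - β * (1 - q) * Hd x) := by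
    funext x; ring
  rw [hsplit]
  refine ⟨(hJ.mul_sub_mul hK _ _).monotone_of_monotone_add
      ((hGa.continuous.const_mul _).sub (hHa.continuous.const_mul _))
      (hGd.1.rightContinuous_mul_sub_mul hHd.1 _ _), fun ⟨ha, hd⟩ => ha.add hd⟩

lemma maxMonoCoeff_mix_mix {p q : ℝ} (hp : p ∈ Ioo (0 : ℝ) 1) (hq : q ∈ Ioo (0 : ℝ) 1) :
    maxMonoCoeff (fun x => p * Ga x + (1 - p) * Gd x) (fun x => q * Ha x + (1 - q) * Hd x) =
      min (p * maxMonoCoeff Ga Ha / q) ((1 - p) * maxMonoCoeff Gd Hd / (1 - q)) := by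
  refine eq_of_forall_le_iff fun β => ?_
  rw [← monotone_sub_mul_iff_le (hGa.1.mix hGd.1 hp.1.le hp.2.le)
      (hHa.1.mix hHd.1 hq.1.le hq.2.le), monotone_mix_sub_mul_mix_iff hGa hHa hGd hHd,
    monotone_mul_sub_mul_iff hGa.1 hHa.1 hp.1,
    monotone_mul_sub_mul_iff hGd.1 hHd.1 (sub_pos.2 hp.2), le_min_iff, le_div_iff₀ hq.1,
    le_div_iff₀ (sub_pos.2 hq.2)]

end acDiscrete

theorem alpha0_mixed_general
    (Fsa Fba Fsd Fbd : ℝ → ℝ)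
    (hFsa : IsACCDF Fsa) (hFba : IsACCDF Fba)
    (hFsd : IsDiscreteCDF Fsd) (hFbd : IsDiscreteCDF Fbd)
    (κs κb : ℝ) (hκs : κs ∈ Set.Ioo (0 : ℝ) 1) (hκb : κb ∈ Set.Ioo (0 : ℝ) 1)
    (Fs Fb : ℝ → ℝ)
    (hFs : Fs = fun x => κs * Fsa x + (1 - κs) * Fsd x)
    (hFb : Fb = fun x => κb * Fba x + (1 - κb) * Fbd x)
    (α : ℝ) (hα : α ∈ Set.Ioc (0 : ℝ) 1)
    (F : ℝ → ℝ) (hF : F = fun x => α * Fs x + (1 - α) * Fb x)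
    (κ : ℝ) (hκ : κ = α * κs + (1 - α) * κb) (hκmem : κ ∈ Set.Ioo (0 : ℝ) 1)
    (Fa Fd : ℝ → ℝ)
    (hFa : Fa = fun x => (α * κs * Fsa x + (1 - α) * κb * Fba x) / κ)
    (hFd : Fd = fun x => (α * (1 - κs) * Fsd x + (1 - α) * (1 - κb) * Fbd x) / (1 - κ)) :
    alpha0 F Fb =
      α - min ((α * κs - alpha0 Fa Fba * κ) / κb)
              ((α * (1 - κs) - alpha0 Fd Fbd * (1 - κ)) / (1 - κb)) := by
  obtain ⟨hα₀, hα₁⟩ := hα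
  have hκ₀ : 0 < κ := hκmem.1
  have h1κ : 0 < 1 - κ := sub_pos.2 hκmem.2
  have h1κs : 0 < 1 - κs := sub_pos.2 hκs.2
  have hFa' : Fa = fun x => α * κs / κ * Fsa x + (1 - α * κs / κ) * Fba x := by
    rw [hFa]; funext x; field_simp; rw [hκ]; ring
  have hFd' : Fd = fun x =>
      α * (1 - κs) / (1 - κ) * Fsd x + (1 - α * (1 - κs) / (1 - κ)) * Fbd x := by
    rw [hFd]; funext x; field_simp; rw [hκ]; ring
  have hA : alpha0 Fa Fba * κ = α * κs * (1 - maxMonoCoeff Fsa Fba) := by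
    have : α * κs ≤ κ := by nlinarith [mul_nonneg (sub_nonneg.2 hα₁) hκb.1.le]
    rw [hFa', alpha0_mix hFsa.1 hFba.1 (by have := hκs.1; positivity)
      (div_le_one_of_le₀ this hκ₀.le)]
    field_simp
  have hD : alpha0 Fd Fbd * (1 - κ) = α * (1 - κs) * (1 - maxMonoCoeff Fsd Fbd) := by
    have : α * (1 - κs) ≤ 1 - κ := by
      nlinarith [mul_nonneg (sub_nonneg.2 hα₁) (sub_pos.2 hκb.2).le]
    rw [hFd', alpha0_mix hFsd.1 hFbd.1 (by positivity) (div_le_one_of_le₀ this h1κ.le)]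
    field_simp
  have hFsCDF : IsCDF Fs := hFs ▸ hFsa.1.mix hFsd.1 hκs.1.le hκs.2.le
  have hFbCDF : IsCDF Fb := hFb ▸ hFba.1.mix hFbd.1 hκb.1.le hκb.2.le
  rw [hF, alpha0_mix hFsCDF hFbCDF hα₀ hα₁, hFs, hFb,
    maxMonoCoeff_mix_mix hFsa hFba hFsd hFbd hκs hκb, hA, hD,
    mul_sub, mul_one, mul_min_of_nonneg _ _ hα₀.le]
  congr 2 <;> ring

/-- Lemma 5: decomposition of α₀ into the absolutely continuous and discrete parts. -/
theorem alpha0_mixed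
    (Fsa Fba Fsd Fbd : ℝ → ℝ)
    (hFsa : IsACCDF Fsa) (hFba : IsACCDF Fba)
    (hFsd : IsDiscreteCDF Fsd) (hFbd : IsDiscreteCDF Fbd)
    (κs κb : ℝ) (hκs : κs ∈ Set.Ioo (0 : ℝ) 1) (hκb : κb ∈ Set.Ioo (0 : ℝ) 1)
    (Fs Fb : ℝ → ℝ)
    (hFs : Fs = fun x => κs * Fsa x + (1 - κs) * Fsd x)
    (hFb : Fb = fun x => κb * Fba x + (1 - κb) * Fbd x)
    (hne : Fs ≠ Fb)
    (α : ℝ) (hα : α ∈ Set.Ioc (0 : ℝ) 1)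
    (F : ℝ → ℝ) (hF : F = fun x => α * Fs x + (1 - α) * Fb x)
    (κ : ℝ) (hκ : κ = α * κs + (1 - α) * κb) (hκmem : κ ∈ Set.Ioo (0 : ℝ) 1)
    (Fa Fd : ℝ → ℝ)
    (hFa : Fa = fun x => (α * κs * Fsa x + (1 - α) * κb * Fba x) / κ)
    (hFd : Fd = fun x => (α * (1 - κs) * Fsd x + (1 - α) * (1 - κb) * Fbd x) / (1 - κ)) :
    alpha0 F Fb =
      α - min ((α * κs - alpha0 Fa Fba * κ) / κb)
              ((α * (1 - κs) - alpha0 Fd Fbd * (1 - κ)) / (1 - κb)) :=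
  alpha0_mixed_general Fsa Fba Fsd Fbd hFsa hFba hFsd hFbd κs κb hκs hκb Fs Fb hFs hFb α hα F hF κ
    hκ hκmem Fa Fd hFa hFd
end

section
/- For every t ≥ 0, the set A := {γ ∈ [0,1] : √n·C(γ) ≤ t} is a convex subset of [0,1] that contains 1; consequently A is an interval of the form [inf A, 1]. -/
/-! Writing `W = F_b + D`, the residual is `(𝔽_n − F_b) − γ D`, so after the isometric
embedding `g ↦ (n^{-1/2} g(xᵢ))ᵢ` into Euclidean space, `C(γ)` is the distance from a fixed
vector to the dilate `γ • K` of the convex set `K` of embedded deviations `D`. Mixing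
near-optimal points of `γ₁ • K` and `γ₂ • K` makes this distance convex in `γ`, and since `K`
lies in the unit ball it is 1-Lipschitz. As `𝔽_n` is itself a CDF, `C(1) = 0`. A sublevel set
of a continuous convex function on `[0, 1]` containing `1` is a closed interval ending at `1`. -/

open Filter Topology

open Set Metric Pointwise NNReal MeasureTheory
open ProbabilityTheory (cdf monotone_cdf tendsto_cdf_atBot tendsto_cdf_atTop cdf_eq_real)

lemma IsCDF.nonneg_s11 {G : ℝ → ℝ} (h : IsCDF G) (x : ℝ) : 0 ≤ G x :=
  le_of_tendsto h.2.2.1 ((eventually_le_atBot x).mono fun _ hy => h.1 hy)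

lemma IsCDF.le_one_s11 {G : ℝ → ℝ} (h : IsCDF G) (x : ℝ) : G x ≤ 1 :=
  ge_of_tendsto h.2.2.2 ((eventually_ge_atTop x).mono fun _ hy => h.1 hy)

lemma isCDF_cdf (μ : Measure ℝ) : IsCDF (cdf μ) :=
  ⟨monotone_cdf μ, (cdf μ).right_continuous, tendsto_cdf_atBot μ, tendsto_cdf_atTop μ⟩

lemma isCDF_step (a : ℝ) : IsCDF fun s => if a ≤ s then 1 else 0 := by
  convert isCDF_cdf (Measure.dirac a) using 1
  ext s
  rw [cdf_eq_real, Measure.real, Measure.dirac_apply' _ measurableSet_Iic]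
  by_cases h : a ≤ s <;> simp [h]

lemma convex_setOf_isCDF : Convex ℝ {G | IsCDF G} := by
  rintro F ⟨hFm, hFc, hF0, hF1⟩ G ⟨hGm, hGc, hG0, hG1⟩ a b ha hb hab
  refine ⟨(hFm.const_smul ha).add (hGm.const_smul hb),
    fun x => ((hFc x).const_smul a).add ((hGc x).const_smul b), ?_, ?_⟩
  · rw [show (0 : ℝ) = a • 0 + b • 0 by simp]
    exact (hF0.const_smul a).add (hG0.const_smul b)
  · rw [show (1 : ℝ) = a • 1 + b • 1 by simp [hab]]
    exact (hF1.const_smul a).add (hG1.const_smul b)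

lemma isCDF_empirical {n : ℕ} (hn : 0 < n) (x : Fin n → ℝ) :
    IsCDF fun s => (n : ℝ)⁻¹ * ∑ i, if x i ≤ s then (1 : ℝ) else 0 := by
  have h : IsCDF (∑ i, (n : ℝ)⁻¹ • fun s => if x i ≤ s then (1 : ℝ) else 0) :=
    convex_setOf_isCDF.sum_mem (fun _ _ => by positivity) (by simp [hn.ne'])
      fun i _ => isCDF_step (x i)
  convert h using 1
  ext s
  simp only [Finset.sum_apply, Pi.smul_apply, smul_eq_mul, Finset.mul_sum]

section ScaledInfDist

variable {E : Type*} [SeminormedAddCommGroup E] [NormedSpace ℝ E] {K : Set E}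

lemma convexOn_infDist_smul (hK : Convex ℝ K) (hne : K.Nonempty) (v : E) :
    ConvexOn ℝ (Ici 0) fun γ : ℝ => infDist v (γ • K) := by
  refine ⟨convex_Ici 0, fun γ₁ hγ₁ γ₂ hγ₂ a b ha hb hab => ?_⟩
  simp only [smul_eq_mul]
  refine le_of_forall_pos_le_add fun ε hε => ?_
  obtain ⟨y₁, hy₁, hd₁⟩ := (infDist_lt_iff (hne.smul_set (a := γ₁))).1
    (lt_add_of_pos_right (infDist v (γ₁ • K)) hε)
  obtain ⟨y₂, hy₂, hd₂⟩ := (infDist_lt_iff (hne.smul_set (a := γ₂))).1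
    (lt_add_of_pos_right (infDist v (γ₂ • K)) hε)
  have hmem : a • y₁ + b • y₂ ∈ (a * γ₁ + b * γ₂) • K := by
    rw [hK.add_smul (mul_nonneg ha hγ₁) (mul_nonneg hb hγ₂), ← smul_smul, ← smul_smul]
    exact add_mem_add (smul_mem_smul_set hy₁) (smul_mem_smul_set hy₂)
  calc infDist v ((a * γ₁ + b * γ₂) • K)
      ≤ dist (a • v + b • v) (a • y₁ + b • y₂) := by
        rw [← add_smul, hab, one_smul]
        exact infDist_le_dist_of_mem hmem
    _ ≤ a * dist v y₁ + b * dist v y₂ := by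
        refine (dist_add_add_le _ _ _ _).trans_eq ?_
        rw [dist_smul₀, dist_smul₀, Real.norm_of_nonneg ha, Real.norm_of_nonneg hb]
    _ ≤ a * (infDist v (γ₁ • K) + ε) + b * (infDist v (γ₂ • K) + ε) := by
        gcongr
    _ = a * infDist v (γ₁ • K) + b * infDist v (γ₂ • K) + ε := by
        linear_combination ε * hab

lemma lipschitzWith_infDist_smul {r : ℝ≥0} (hK : K ⊆ closedBall 0 r) (hne : K.Nonempty)
    (v : E) : LipschitzWith r fun γ : ℝ => infDist v (γ • K) := by
  refine LipschitzWith.of_le_add_mul r fun γ₁ γ₂ => ?_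
  rw [← sub_le_iff_le_add, le_infDist (hne.smul_set (a := γ₂))]
  rintro _ ⟨k, hk, rfl⟩
  have hk_norm : ‖k‖ ≤ r := by simpa using hK hk
  calc infDist v (γ₁ • K) - r * dist γ₁ γ₂
      ≤ dist v (γ₁ • k) - dist (γ₂ • k) (γ₁ • k) := by
        gcongr
        · exact infDist_le_dist_of_mem (smul_mem_smul_set hk)
        · calc dist (γ₂ • k) (γ₁ • k) = ‖k‖ * dist γ₁ γ₂ := by
                rw [dist_eq_norm, ← sub_smul, norm_smul, mul_comm, dist_comm, dist_eq_norm]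
            _ ≤ r * dist γ₁ γ₂ := by gcongr
    _ ≤ dist v (γ₂ • k) := by linarith [dist_triangle v (γ₂ • k) (γ₁ • k)]

end ScaledInfDist

lemma ConvexOn.sublevel_eq_Icc_csInf {f : ℝ → ℝ} {a b t : ℝ} (hf : ConvexOn ℝ (Icc a b) f)
    (hcont : ContinuousOn f (Icc a b)) (hab : a ≤ b) (hb : f b ≤ t) :
    {γ ∈ Icc a b | f γ ≤ t} = Icc (sInf {γ ∈ Icc a b | f γ ≤ t}) b := by
  set A := {γ ∈ Icc a b | f γ ≤ t}
  have hbA : b ∈ A := ⟨right_mem_Icc.2 hab, hb⟩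
  have hA_compact : IsCompact A :=
    isCompact_Icc.of_isClosed_subset
      (hcont.preimage_isClosed_of_isClosed isClosed_Icc isClosed_Iic) fun _ h => h.1
  have hb_greatest : IsGreatest A b := ⟨hbA, fun _ h => h.1.2⟩
  conv_lhs =>
    rw [eq_Icc_of_connected_compact ⟨⟨b, hbA⟩, (hf.convex_le t).isPreconnected⟩ hA_compact]
  rw [hb_greatest.csSup_eq]

section Sample

variable {n : ℕ} (x : Fin n → ℝ)

noncomputable def sampleVec : (ℝ → ℝ) →ₗ[ℝ] EuclideanSpace ℝ (Fin n) where
  toFun g := WithLp.toLp 2 fun i => √(n : ℝ)⁻¹ * g (x i)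
  map_add' g h := by ext i; simp [mul_add]
  map_smul' c g := by ext i; simp; ring

lemma norm_sampleVec (g : ℝ → ℝ) :
    ‖sampleVec x g‖ = √((n : ℝ)⁻¹ * ∑ i, g (x i) ^ 2) := by
  simp [sampleVec, EuclideanSpace.norm_eq, mul_pow, Finset.mul_sum]

def sampleDeviations (Fb : ℝ → ℝ) : Set (EuclideanSpace ℝ (Fin n)) :=
  sampleVec x '' {D | IsCDF (Fb + D)}

lemma convex_sampleDeviations (Fb : ℝ → ℝ) : Convex ℝ (sampleDeviations x Fb) :=
  (convex_setOf_isCDF.translate_preimage_right Fb).linear_image _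

lemma sampleDeviations_nonempty (Fb : ℝ → ℝ) : (sampleDeviations x Fb).Nonempty :=
  ⟨_, mem_image_of_mem _ (show IsCDF (Fb + (_ - Fb)) by simpa using isCDF_step 0)⟩

lemma sampleDeviations_subset_closedBall {Fb : ℝ → ℝ} (hFb : IsCDF Fb) :
    sampleDeviations x Fb ⊆ closedBall 0 (1 : ℝ≥0) := by
  rintro _ ⟨D, hD, rfl⟩
  have hD_sq : ∀ i, D (x i) ^ 2 ≤ 1 := fun i => by
    have h₁ := hD.nonneg_s11 (x i); have h₂ := hD.le_one_s11 (x i)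
    have h₃ := hFb.nonneg_s11 (x i); have h₄ := hFb.le_one_s11 (x i)
    simp only [Pi.add_apply] at h₁ h₂
    nlinarith
  have hmean : (n : ℝ)⁻¹ * ∑ i, D (x i) ^ 2 ≤ 1 := by
    calc (n : ℝ)⁻¹ * ∑ i, D (x i) ^ 2 ≤ (n : ℝ)⁻¹ * n := by
          gcongr
          simpa using Finset.sum_le_sum fun i (_ : i ∈ Finset.univ) => hD_sq i
      _ ≤ 1 := inv_mul_le_one_of_le₀ le_rfl (Nat.cast_nonneg n)
  rw [mem_closedBall_zero_iff, norm_sampleVec, NNReal.coe_one, Real.sqrt_le_one]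
  exact hmean

lemma rms_residual_eq_dist (Fn Fb W : ℝ → ℝ) (γ : ℝ) :
    √((n : ℝ)⁻¹ * ∑ i, (Fn (x i) - γ * W (x i) - (1 - γ) * Fb (x i)) ^ 2) =
      dist (sampleVec x (Fn - Fb)) (γ • sampleVec x (W - Fb)) := by
  rw [dist_eq_norm, ← map_smul, ← map_sub, norm_sampleVec]
  congr 2
  refine Finset.sum_congr rfl fun i _ => ?_
  simp only [Pi.sub_apply, Pi.smul_apply, smul_eq_mul]
  ring

lemma sInf_rms_residual_eq_infDist (Fn Fb : ℝ → ℝ) (γ : ℝ) :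
    sInf {v : ℝ | ∃ W : ℝ → ℝ, IsCDF W ∧ v = √((n : ℝ)⁻¹ *
        ∑ i, (Fn (x i) - γ * W (x i) - (1 - γ) * Fb (x i)) ^ 2)} =
      infDist (sampleVec x (Fn - Fb)) (γ • sampleDeviations x Fb) := by
  have hne := (sampleDeviations_nonempty x Fb).smul_set (a := γ)
  rw [← (isGLB_infDist hne).csInf_eq (hne.image _)]
  congr 1
  ext r
  constructor
  · rintro ⟨W, hW, rfl⟩
    refine ⟨_, smul_mem_smul_set (mem_image_of_mem _ ?_), (rms_residual_eq_dist x Fn Fb W γ).symm⟩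
    simpa using hW
  · rintro ⟨_, ⟨_, ⟨D, hD, rfl⟩, rfl⟩, rfl⟩
    exact ⟨Fb + D, hD, by rw [rms_residual_eq_dist, add_sub_cancel_left]⟩

end Sample

/-- Lemma 7: the set Aₙ = {γ ∈ [0,1] : √n γ dₙ(F̂ₛₙᵞ, F̌ₛₙᵞ) ≤ t} is a convex
subset of [0,1] containing 1, hence an interval of the form [inf Aₙ, 1]. -/
theorem level_set_is_interval
    (Fb : ℝ → ℝ) (hFb : IsCDF Fb)
    (n : ℕ) (hn : 0 < n) (x : Fin n → ℝ)
    (Fn : ℝ → ℝ) (hFn : Fn = fun t => (n : ℝ)⁻¹ * ∑ i, if x i ≤ t then (1 : ℝ) else 0)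
    (C : ℝ → ℝ)
    (hC0 : C 0 = Real.sqrt ((n : ℝ)⁻¹ * ∑ i, (Fn (x i) - Fb (x i)) ^ 2))
    (hC : ∀ γ ∈ Set.Ioc (0 : ℝ) 1, C γ = sInf {v : ℝ | ∃ W : ℝ → ℝ, IsCDF W ∧
      v = Real.sqrt ((n : ℝ)⁻¹ *
        ∑ i, (Fn (x i) - γ * W (x i) - (1 - γ) * Fb (x i)) ^ 2)})
    (t : ℝ) (ht : 0 ≤ t)
    (A : Set ℝ) (hA : A = {γ : ℝ | γ ∈ Set.Icc (0 : ℝ) 1 ∧ Real.sqrt n * C γ ≤ t}) :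
    Convex ℝ A ∧ A ⊆ Set.Icc (0 : ℝ) 1 ∧ (1 : ℝ) ∈ A ∧ A = Set.Icc (sInf A) 1 := by
  set v := sampleVec x (Fn - Fb)
  have hK_ne := sampleDeviations_nonempty x Fb
  have hC_eq : EqOn C (fun γ => infDist v (γ • sampleDeviations x Fb)) (Icc 0 1) := by
    intro γ hγ
    dsimp only
    rcases hγ.1.eq_or_lt with rfl | hγ_pos
    · rw [hC0, zero_smul_set hK_ne, ← singleton_zero, infDist_singleton, dist_zero_right,
        norm_sampleVec]
      rfl
    · rw [hC γ ⟨hγ_pos, hγ.2⟩, sInf_rms_residual_eq_infDist]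
  have hconv : ConvexOn ℝ (Icc 0 1) fun γ => √n * C γ :=
    (((convexOn_infDist_smul (convex_sampleDeviations x Fb) hK_ne v).subset Icc_subset_Ici_self
      (convex_Icc 0 1)).congr hC_eq.symm).smul (Real.sqrt_nonneg _)
  have hcont : ContinuousOn (fun γ => √n * C γ) (Icc 0 1) :=
    continuousOn_const.mul ((lipschitzWith_infDist_smul
      (sampleDeviations_subset_closedBall x hFb) hK_ne v).continuous.continuousOn.congr hC_eq)
  have hC1 : C 1 = 0 := by
    simp only [hC_eq (right_mem_Icc.2 zero_le_one), one_smul]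
    refine infDist_zero_of_mem (mem_image_of_mem _ ?_)
    simpa [hFn] using isCDF_empirical hn x
  have h1 : √n * C 1 ≤ t := by rw [hC1, mul_zero]; exact ht
  subst hA
  exact ⟨hconv.convex_le t, fun _ h => h.1, ⟨right_mem_Icc.2 zero_le_one, h1⟩,
    hconv.sublevel_eq_Icc_csInf hcont zero_le_one h1⟩
end

section
/- Assume α₀ > 0 and set r_n := √n/c_n. If c_n → ∞ as n → ∞, then for every M > 0, P(r_n(α̂_n − α₀) > M) → 0 as n → ∞. -/
open Filter Topology MeasureTheory ProbabilityTheory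

variable {Ω : Type*} [MeasurableSpace Ω]

/-- The empirical CDF of the first n observations X₁(ω), …, Xₙ(ω). -/
noncomputable def empCDF (X : ℕ → Ω → ℝ) (n : ℕ) (ω : Ω) (x : ℝ) : ℝ :=
  (n : ℝ)⁻¹ * ∑ i ∈ Finset.range n, if X i ω ≤ x then (1 : ℝ) else 0

/-- The empirical L₂ distance dₙ(g,h) between two functions, based on the data
X₁(ω), …, Xₙ(ω). -/
noncomputable def empDist (X : ℕ → Ω → ℝ) (n : ℕ) (ω : Ω) (g h : ℝ → ℝ) : ℝ :=
  Real.sqrt ((n : ℝ)⁻¹ * ∑ i ∈ Finset.range n, (g (X i ω) - h (X i ω)) ^ 2)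

/-- The criterion function Cₙ(γ) = γ dₙ(F̂ₛₙᵞ, F̌ₛₙᵞ)
  = inf over CDFs W of dₙ(𝔽ₙ, γW + (1−γ)F_b), with Cₙ(0) = dₙ(𝔽ₙ, F_b). -/
noncomputable def critFn (Fb : ℝ → ℝ) (X : ℕ → Ω → ℝ) (n : ℕ) (γ : ℝ) (ω : Ω) : ℝ :=
  if γ = 0 then empDist X n ω (empCDF X n ω) Fb
  else sInf {v : ℝ | ∃ W : ℝ → ℝ, IsCDF W ∧
    v = empDist X n ω (empCDF X n ω) (fun x => γ * W x + (1 - γ) * Fb x)}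

/-- The estimator α̂ₙ = inf{γ ∈ [0,1] : √n Cₙ(γ) ≤ cₙ}. -/
noncomputable def hatAlpha (Fb : ℝ → ℝ) (X : ℕ → Ω → ℝ) (cn : ℝ) (n : ℕ) (ω : Ω) : ℝ :=
  sInf {γ : ℝ | γ ∈ Set.Icc (0 : ℝ) 1 ∧ Real.sqrt n * critFn Fb X n γ ω ≤ cn}


/-!
For every γ in the set defining α₀, the choice W = (F − (1 − γ)F_b)/γ in C_n(γ) makes
γW + (1 − γ)F_b = F, so C_n(γ) ≤ d_n(𝔽_n, F). Hence α̂_n ≤ α₀ as soon as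
√n·d_n(𝔽_n, F) ≤ c_n, and the event r_n(α̂_n − α₀) > M forces
c_n² ≤ n·d_n(𝔽_n, F)² = Σᵢ (𝔽_n(Xᵢ) − F(Xᵢ))².

Each 𝔽_n(Xᵢ) − F(Xᵢ) is the average over j of the centred indicators 1{X_j ≤ Xᵢ} − F(Xᵢ).
For j ∉ {i, k}, X_j is independent of (X_k, Xᵢ) and the j-th indicator has mean zero given
(X_k, Xᵢ), so for each i at most 2n of the n² cross products have non-zero expectation, each
bounded by 1, and E Σᵢ (𝔽_n(Xᵢ) − F(Xᵢ))² ≤ 2.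
Markov's inequality bounds the probability of the event by 2/c_n² → 0.
-/

open Finset

section Estimator

variable {Ω : Type*} {Fb F : ℝ → ℝ} {X : ℕ → Ω → ℝ} {n : ℕ} {ω : Ω}

theorem critFn_le_empDist_of_isCDF {γ : ℝ} (hγ : γ ≠ 0)
    (hW : IsCDF (fun x => (F x - (1 - γ) * Fb x) / γ)) :
    critFn Fb X n γ ω ≤ empDist X n ω (empCDF X n ω) F := by
  rw [critFn, if_neg hγ]
  refine csInf_le ⟨0, ?_⟩ ⟨_, hW, ?_⟩
  · rintro v ⟨W, -, rfl⟩
    exact Real.sqrt_nonneg _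
  · congr 1
    funext x
    field_simp
    ring

theorem hatAlpha_le_alpha0 {cn : ℝ} (hα₀ : 0 < alpha0 F Fb)
    (hF : Real.sqrt n * empDist X n ω (empCDF X n ω) F ≤ cn) :
    hatAlpha Fb X cn n ω ≤ alpha0 F Fb := by
  refine le_csInf (Set.nonempty_iff_ne_empty.2 fun h => ?_) ?_
  · rw [alpha0, h, Real.sInf_empty] at hα₀
    exact lt_irrefl 0 hα₀
  rintro γ ⟨hγ, hW⟩
  refine csInf_le ⟨0, fun _ h => h.1.1⟩ ⟨Set.Ioc_subset_Icc_self hγ, ?_⟩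
  exact (mul_le_mul_of_nonneg_left (critFn_le_empDist_of_isCDF hγ.1.ne' hW)
    (Real.sqrt_nonneg _)).trans hF

theorem sqrt_mul_empDist (g h : ℝ → ℝ) :
    Real.sqrt n * empDist X n ω g h =
      Real.sqrt (∑ i ∈ range n, (g (X i ω) - h (X i ω)) ^ 2) := by
  rcases n.eq_zero_or_pos with rfl | hn
  · simp
  rw [empDist, ← Real.sqrt_mul (Nat.cast_nonneg n), ← mul_assoc,
    mul_inv_cancel₀ (by positivity), one_mul]

noncomputable def centeredIndicator (F : ℝ → ℝ) (x y : ℝ) : ℝ :=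
  (if x ≤ y then 1 else 0) - F y

theorem abs_centeredIndicator_le_one (hF : ∀ y, F y ∈ Set.Icc 0 1) (x y : ℝ) :
    |centeredIndicator F x y| ≤ 1 := by
  obtain ⟨h0, h1⟩ := hF y
  rw [centeredIndicator, abs_le]
  split_ifs <;> constructor <;> linarith

theorem measurable_centeredIndicator (hF : Measurable F) :
    Measurable fun p : ℝ × ℝ => centeredIndicator F p.1 p.2 :=
  (Measurable.ite (measurableSet_le measurable_fst measurable_snd) measurable_const
    measurable_const).sub (hF.comp measurable_snd)

theorem empCDF_sub_eq_average (hn : n ≠ 0) (x : ℝ) :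
    empCDF X n ω x - F x = (n : ℝ)⁻¹ * ∑ j ∈ range n, centeredIndicator F (X j ω) x := by
  simp only [empCDF, centeredIndicator, sum_sub_distrib, sum_const, card_range, nsmul_eq_mul,
    mul_sub]
  rw [inv_mul_cancel_left₀ (Nat.cast_ne_zero.2 hn)]

theorem abs_empCDF_sub_le_one (hF : ∀ y, F y ∈ Set.Icc 0 1) (x : ℝ) :
    |empCDF X n ω x - F x| ≤ 1 := by
  rcases eq_or_ne n 0 with rfl | hn
  · simpa [empCDF, abs_le] using ⟨by linarith [(hF x).1], (hF x).2⟩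
  rw [empCDF_sub_eq_average hn, abs_mul, abs_inv, Nat.abs_cast, inv_mul_le_iff₀ (by positivity)]
  calc |∑ j ∈ range n, centeredIndicator F (X j ω) x|
      ≤ ∑ j ∈ range n, |centeredIndicator F (X j ω) x| := abs_sum_le_sum_abs _ _
    _ ≤ ∑ j ∈ range n, (1 : ℝ) := sum_le_sum fun j _ => abs_centeredIndicator_le_one hF _ _
    _ = n * 1 := by simp

end Estimator

section Probability

variable {P : Measure Ω} [IsProbabilityMeasure P] {F : ℝ → ℝ} {X : ℕ → Ω → ℝ}

theorem integral_comp_eq_zero_of_indepFun {β γ : Type*} [MeasurableSpace β] [MeasurableSpace γ]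
    {Y : Ω → β} {Z : Ω → γ} (hY : Measurable Y) (hZ : Measurable Z) (hind : IndepFun Z Y P)
    {φ : γ × β → ℝ} (hφ : Measurable φ) {C : ℝ} (hφC : ∀ p, |φ p| ≤ C)
    (h0 : ∀ z, ∫ ω, φ (z, Y ω) ∂P = 0) :
    ∫ ω, φ (Z ω, Y ω) ∂P = 0 := by
  have : IsProbabilityMeasure (P.map Y) := Measure.isProbabilityMeasure_map hY.aemeasurable
  have : IsProbabilityMeasure (P.map Z) := Measure.isProbabilityMeasure_map hZ.aemeasurable
  have hlaw := (indepFun_iff_map_prod_eq_prod_map_map hZ.aemeasurable hY.aemeasurable).1 hind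
  have hint : Integrable φ ((P.map Z).prod (P.map Y)) :=
    .of_bound hφ.aestronglyMeasurable C (ae_of_all _ hφC)
  rw [← integral_map (f := φ) (hZ.prodMk hY).aemeasurable hφ.aestronglyMeasurable, hlaw,
    integral_prod φ hint]
  have h0' (z : γ) : ∫ y, φ (z, y) ∂(P.map Y) = 0 := by
    rw [integral_map (f := fun y => φ (z, y)) hY.aemeasurable
      (hφ.comp measurable_prodMk_left).aestronglyMeasurable]
    exact h0 z
  simp [h0']

theorem cdf_mem_Icc {Y : Ω → ℝ} (hdist : ∀ x, (P {ω | Y ω ≤ x}).toReal = F x) (x : ℝ) :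
    F x ∈ Set.Icc 0 1 :=
  hdist x ▸ ⟨ENNReal.toReal_nonneg,
    ENNReal.toReal_le_of_le_ofReal zero_le_one (by simpa using prob_le_one)⟩

theorem monotone_of_cdf {Y : Ω → ℝ} (hdist : ∀ x, (P {ω | Y ω ≤ x}).toReal = F x) :
    Monotone F := fun x y hxy => by
  rw [← hdist, ← hdist]
  exact ENNReal.toReal_mono (measure_ne_top _ _) (measure_mono fun ω h => le_trans h hxy)

theorem integral_centeredIndicator {Y : Ω → ℝ} (hY : Measurable Y)
    (hdist : ∀ x, (P {ω | Y ω ≤ x}).toReal = F x) (y : ℝ) :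
    ∫ ω, centeredIndicator F (Y ω) y ∂P = 0 := by
  have hset : MeasurableSet {ω | Y ω ≤ y} := measurableSet_le hY measurable_const
  have hind : (fun ω => centeredIndicator F (Y ω) y) =
      fun ω => Set.indicator {ω | Y ω ≤ y} 1 ω - F y := by
    ext ω
    simp [centeredIndicator, Set.indicator_apply]
  rw [hind, integral_sub ((integrable_const 1).indicator hset) (integrable_const _),
    integral_indicator_one hset, integral_const, measureReal_def, hdist]
  simp

theorem integral_sq_sum_le {f : ℕ → Ω → ℝ} (s : Finset ℕ) (i : ℕ)
    (hf : ∀ j, AEStronglyMeasurable (f j) P) (hf1 : ∀ j ω, |f j ω| ≤ 1)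
    (horth : ∀ j k, j ≠ i → j ≠ k → ∫ ω, f j ω * f k ω ∂P = 0) :
    ∫ ω, (∑ j ∈ s, f j ω) ^ 2 ∂P ≤ 2 * #s := by
  have hprod (j k : ℕ) (ω : Ω) : |f j ω * f k ω| ≤ 1 := by
    rw [abs_mul]
    exact mul_le_one₀ (hf1 j ω) (abs_nonneg _) (hf1 k ω)
  have hint (j k : ℕ) : Integrable (fun ω => f j ω * f k ω) P :=
    .of_bound ((hf j).mul (hf k)) 1 (ae_of_all _ (hprod j k))
  have hle (j k : ℕ) : ∫ ω, f j ω * f k ω ∂P ≤ 1 := by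
    simpa using integral_mono (hint j k) (integrable_const 1) fun ω => (abs_le.1 (hprod j k ω)).2
  have hrow (j : ℕ) : ∫ ω, ∑ k ∈ s, f j ω * f k ω ∂P ≤ #s * (if j = i then 1 else 0) + 1 := by
    rw [integral_finsetSum _ fun k _ => hint j k]
    split_ifs with hji
    · calc ∑ k ∈ s, ∫ ω, f j ω * f k ω ∂P ≤ ∑ k ∈ s, (1 : ℝ) := sum_le_sum fun k _ => hle j k
        _ ≤ #s * 1 + 1 := by simp
    · have hdiag : ∑ k ∈ s, ∫ ω, f j ω * f k ω ∂P =
          ∑ k ∈ s, if j = k then ∫ ω, f j ω * f j ω ∂P else 0 :=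
        sum_congr rfl fun k _ => by
          split_ifs with hjk
          · rw [hjk]
          · exact horth j k hji hjk
      rw [hdiag, sum_ite_eq]
      split_ifs
      · simpa using hle j j
      · simp
  calc ∫ ω, (∑ j ∈ s, f j ω) ^ 2 ∂P = ∑ j ∈ s, ∫ ω, ∑ k ∈ s, f j ω * f k ω ∂P := by
        simp_rw [sq, sum_mul_sum]
        exact integral_finsetSum _ fun j _ => integrable_finsetSum _ fun k _ => hint j k
    _ ≤ ∑ j ∈ s, (#s * (if j = i then 1 else 0) + 1 : ℝ) := sum_le_sum fun j _ => hrow j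
    _ ≤ 2 * #s := by
        rw [sum_add_distrib, ← mul_sum, sum_ite_eq']
        split_ifs <;> simp <;> linarith

theorem integral_centeredIndicator_mul_eq_zero (hX : ∀ i, Measurable (X i))
    (hindep : iIndepFun X P) (hdist : ∀ i x, (P {ω | X i ω ≤ x}).toReal = F x)
    {i j k : ℕ} (hji : j ≠ i) (hjk : j ≠ k) :
    ∫ ω, centeredIndicator F (X j ω) (X i ω) * centeredIndicator F (X k ω) (X i ω) ∂P = 0 := by
  have hF := measurable_centeredIndicator (monotone_of_cdf (hdist 0)).measurable
  refine integral_comp_eq_zero_of_indepFun (hX j) ((hX k).prodMk (hX i))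
    (hindep.indepFun_prodMk hX k i j hjk.symm hji.symm)
    (φ := fun p => centeredIndicator F p.2 p.1.2 * centeredIndicator F p.1.1 p.1.2)
    ((hF.comp (measurable_snd.prodMk measurable_fst.snd)).mul
      (hF.comp (measurable_fst.fst.prodMk measurable_fst.snd))) (C := 1)
    (fun p => ?_) (fun z => ?_)
  · rw [abs_mul]
    exact mul_le_one₀ (abs_centeredIndicator_le_one (cdf_mem_Icc (hdist 0)) _ _) (abs_nonneg _)
      (abs_centeredIndicator_le_one (cdf_mem_Icc (hdist 0)) _ _)
  · dsimp only
    rw [integral_mul_const, integral_centeredIndicator (hX j) (hdist j), zero_mul]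

theorem integrable_sq_empCDF_sub (hX : ∀ i, Measurable (X i))
    (hdist : ∀ i x, (P {ω | X i ω ≤ x}).toReal = F x) (n i : ℕ) :
    Integrable (fun ω => (empCDF X n ω (X i ω) - F (X i ω)) ^ 2) P := by
  have hemp : Measurable fun ω => empCDF X n ω (X i ω) :=
    measurable_const.mul (Finset.measurable_sum _ fun j _ =>
      Measurable.ite (measurableSet_le (hX j) (hX i)) measurable_const measurable_const)
  refine .of_bound ?_ 1 (ae_of_all _ fun ω => ?_)
  · have hF := (monotone_of_cdf (hdist 0)).measurable
    exact ((hemp.sub (hF.comp (hX i))).pow_const 2).aestronglyMeasurable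
  · rw [Real.norm_eq_abs, abs_pow]
    exact pow_le_one₀ (abs_nonneg _) (abs_empCDF_sub_le_one (cdf_mem_Icc (hdist 0)) _)

theorem integral_sum_sq_empCDF_sub_le (hX : ∀ i, Measurable (X i)) (hindep : iIndepFun X P)
    (hdist : ∀ i x, (P {ω | X i ω ≤ x}).toReal = F x) (n : ℕ) :
    ∫ ω, ∑ i ∈ range n, (empCDF X n ω (X i ω) - F (X i ω)) ^ 2 ∂P ≤ 2 := by
  rcases eq_or_ne n 0 with rfl | hn
  · simp
  have hFm := (monotone_of_cdf (hdist 0)).measurable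
  have hterm (i : ℕ) : ∫ ω, (empCDF X n ω (X i ω) - F (X i ω)) ^ 2 ∂P ≤ 2 / n := by
    have hsq := integral_sq_sum_le (P := P) (range n) i
      (f := fun j ω => centeredIndicator F (X j ω) (X i ω))
      (fun j =>
        ((measurable_centeredIndicator hFm).comp ((hX j).prodMk (hX i))).aestronglyMeasurable)
      (fun j ω => abs_centeredIndicator_le_one (cdf_mem_Icc (hdist 0)) _ _)
      (fun j k hji hjk => integral_centeredIndicator_mul_eq_zero hX hindep hdist hji hjk)
    rw [card_range] at hsq
    simp_rw [empCDF_sub_eq_average hn, mul_pow]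
    rw [integral_const_mul]
    calc ((n : ℝ)⁻¹) ^ 2 * ∫ ω, (∑ j ∈ range n, centeredIndicator F (X j ω) (X i ω)) ^ 2 ∂P
        ≤ ((n : ℝ)⁻¹) ^ 2 * (2 * n) := by gcongr
      _ = (2 / n : ℝ) := by field_simp
  rw [integral_finsetSum _ fun i _ => integrable_sq_empCDF_sub hX hdist n i]
  calc ∑ i ∈ range n, ∫ ω, (empCDF X n ω (X i ω) - F (X i ω)) ^ 2 ∂P
      ≤ ∑ i ∈ range n, (2 / n : ℝ) := sum_le_sum fun i _ => hterm i
    _ = 2 := by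
        rw [sum_const, card_range, nsmul_eq_mul]
        field_simp

theorem measure_le_sum_sq_empCDF_sub_le (hX : ∀ i, Measurable (X i)) (hindep : iIndepFun X P)
    (hdist : ∀ i x, (P {ω | X i ω ≤ x}).toReal = F x) (n : ℕ) {ε : ℝ} (hε : 0 < ε) :
    P {ω | ε ≤ ∑ i ∈ range n, (empCDF X n ω (X i ω) - F (X i ω)) ^ 2} ≤
      ENNReal.ofReal (2 / ε) := by
  rw [ENNReal.le_ofReal_iff_toReal_le (measure_ne_top _ _) (by positivity), ← measureReal_def,
    le_div_iff₀' hε]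
  exact (mul_meas_ge_le_integral_of_nonneg
    (ae_of_all _ fun ω => sum_nonneg fun i _ => sq_nonneg _)
    (integrable_finsetSum _ fun i _ => integrable_sq_empCDF_sub hX hdist n i) ε).trans
    (integral_sum_sq_empCDF_sub_le hX hindep hdist n)

end Probability

theorem hatAlpha_right_tail_general
    (P : Measure Ω) [IsProbabilityMeasure P]
    (Fb : ℝ → ℝ)
    (F : ℝ → ℝ)
    (X : ℕ → Ω → ℝ) (hmeas : ∀ i, Measurable (X i))
    (hindep : iIndepFun X P)
    (hdist : ∀ i, ∀ x : ℝ, (P {ω | X i ω ≤ x}).toReal = F x)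
    (halpha0_pos : 0 < alpha0 F Fb)
    (c : ℕ → ℝ) (hc_pos : ∀ n, 0 < c n)
    (hc_infty : Tendsto c atTop atTop)
    (r : ℕ → ℝ) (hr : r = fun n : ℕ => Real.sqrt n / c n) :
    ∀ M : ℝ, 0 < M →
      Tendsto
        (fun n => P {ω | M < r n * (hatAlpha Fb X (c n) n ω - alpha0 F Fb)})
        atTop (𝓝 0) := by
  intro M hM
  subst hr
  have hevent (n : ℕ) : {ω | M < Real.sqrt n / c n * (hatAlpha Fb X (c n) n ω - alpha0 F Fb)} ⊆
      {ω | c n ^ 2 ≤ ∑ i ∈ range n, (empCDF X n ω (X i ω) - F (X i ω)) ^ 2} := by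
    intro ω hω
    by_contra hsmall
    have hfeasible : Real.sqrt n * empDist X n ω (empCDF X n ω) F ≤ c n := by
      rw [sqrt_mul_empDist, Real.sqrt_le_iff]
      exact ⟨(hc_pos n).le, (not_le.1 hsmall).le⟩
    have hnonpos := mul_nonpos_of_nonneg_of_nonpos
      (div_nonneg (Real.sqrt_nonneg n) (hc_pos n).le)
      (sub_nonpos.2 (hatAlpha_le_alpha0 halpha0_pos hfeasible))
    exact (not_lt.2 (hnonpos.trans hM.le)) hω
  have hbound : Tendsto (fun n => ENNReal.ofReal (2 / c n ^ 2)) atTop (𝓝 0) := by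
    simpa using ENNReal.tendsto_ofReal
      (tendsto_const_nhds.div_atTop (by simpa [sq] using hc_infty.atTop_mul_atTop₀ hc_infty))
  exact tendsto_of_tendsto_of_tendsto_of_le_of_le tendsto_const_nhds hbound (fun _ => zero_le)
    fun n => (measure_mono (hevent n)).trans
      (measure_le_sum_sq_empCDF_sub_le hmeas hindep hdist n (pow_pos (hc_pos n) 2))

/-- Lemma 10: if α₀ > 0 and cₙ → ∞, then with rₙ = √n/cₙ, for every M > 0,
P(rₙ(α̂ₙ − α₀) > M) → 0. -/
theorem hatAlpha_right_tail
    (P : Measure Ω) [IsProbabilityMeasure P]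
    (Fs Fb : ℝ → ℝ) (hFs : IsCDF Fs) (hFb : IsCDF Fb) (hne : Fs ≠ Fb)
    (α : ℝ) (hα : α ∈ Set.Ioc (0 : ℝ) 1)
    (F : ℝ → ℝ) (hF : F = fun x => α * Fs x + (1 - α) * Fb x)
    (X : ℕ → Ω → ℝ) (hmeas : ∀ i, Measurable (X i))
    (hindep : iIndepFun X P)
    (hdist : ∀ i, ∀ x : ℝ, (P {ω | X i ω ≤ x}).toReal = F x)
    (halpha0_pos : 0 < alpha0 F Fb)
    (c : ℕ → ℝ) (hc_pos : ∀ n, 0 < c n)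
    (hc_infty : Tendsto c atTop atTop)
    (r : ℕ → ℝ) (hr : r = fun n : ℕ => Real.sqrt n / c n) :
    ∀ M : ℝ, 0 < M →
      Tendsto
        (fun n => P {ω | M < r n * (hatAlpha Fb X (c n) n ω - alpha0 F Fb)})
        atTop (𝓝 0) :=
  hatAlpha_right_tail_general P Fb F X hmeas hindep hdist halpha0_pos c hc_pos hc_infty r hr
end
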